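/- The operation ⋆ on normal, convex functions is associative: (f ⋆ g) ⋆ h = f ⋆ (g ⋆ h) for all normal convex f, g, h : [0,1] → [0,1]. -/

import Mathlib

open Set Classical

noncomputable section

/-- Left envelope: `f^L(x) = sup {f y : 0 ≤ y ≤ x}`. -/
def fL (f : ℝ → ℝ) (x : ℝ) : ℝ := sSup (f '' Set.Icc 0 x)

/-- Weak left envelope: `f^{Lw}(x) = sup {f y : 0 ≤ y < x}` (for `x ∈ (0,1]`). -/
def fLw (f : ℝ → ℝ) (x : ℝ) : ℝ := sSup (f '' Set.Ico 0 x)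

/-- Right envelope: `f^R(x) = sup {f y : x ≤ y ≤ 1}`. -/
def fR (f : ℝ → ℝ) (x : ℝ) : ℝ := sSup (f '' Set.Icc x 1)

/-- `f` maps `[0,1]` into `[0,1]`. -/
def MapsI (f : ℝ → ℝ) : Prop := ∀ x ∈ Set.Icc (0:ℝ) 1, f x ∈ Set.Icc (0:ℝ) 1

/-- `f` is normal: `sup f = 1` on `[0,1]`. -/
def NormalFn (f : ℝ → ℝ) : Prop := sSup (f '' Set.Icc 0 1) = 1

/-- `f` is convex: `f y ≥ min (f x) (f z)` whenever `0 ≤ x ≤ y ≤ z ≤ 1`. -/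
def ConvexFn (f : ℝ → ℝ) : Prop :=
  ∀ x y z : ℝ, 0 ≤ x → x ≤ y → y ≤ z → z ≤ 1 → min (f x) (f z) ≤ f y

/-- Convolution intersection: `(f ⊓ g)(x) = sup {min (f y) (g z) : min y z = x}`. -/
def inter (f g : ℝ → ℝ) (x : ℝ) : ℝ :=
  sSup {v | ∃ y ∈ Set.Icc (0:ℝ) 1, ∃ z ∈ Set.Icc (0:ℝ) 1, min y z = x ∧ v = min (f y) (g z)}

/-- Convolution union: `(f ⊔ g)(x) = sup {min (f y) (g z) : max y z = x}`. -/
def union (f g : ℝ → ℝ) (x : ℝ) : ℝ :=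
  sSup {v | ∃ y ∈ Set.Icc (0:ℝ) 1, ∃ z ∈ Set.Icc (0:ℝ) 1, max y z = x ∧ v = min (f y) (g z)}

/-- `L₁(f) = inf {x ∈ [0,1] : f^L(x) = 1}`. -/
def L1 (f : ℝ → ℝ) : ℝ := sInf {x ∈ Set.Icc (0:ℝ) 1 | fL f x = 1}

/-- `R¹(f) = sup {x ∈ [0,1] : f^R(x) = 1}`. -/
def R1 (f : ℝ → ℝ) : ℝ := sSup {x ∈ Set.Icc (0:ℝ) 1 | fR f x = 1}

/-- The characteristic function `1_{{1}}`. -/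
def ind1 : ℝ → ℝ := fun x => if x = 1 then 1 else 0

/-- The modified intersection `f ⋆ g`. -/
def star (f g : ℝ → ℝ) : ℝ → ℝ :=
  if Set.EqOn f ind1 (Set.Icc (0:ℝ) 1) then g
  else if Set.EqOn g ind1 (Set.Icc (0:ℝ) 1) then f
  else if min (f 1) (g 1) = 1 then inter f g
  else fun x => if x = 1 then 0 else inter f g x

/-!
The convolution intersection is given by the right envelopes:
`(f ⊓ g)(x) = max (min (f x) (g^R x)) (min (f^R x) (g x))`, and `(f ⋆ g)^R = min (f^R, g^R)`
on `[0,1)`. The latter needs convexity: when `f 1 < 1 = sup f`, the envelope `f^R` is approached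
strictly below `1`, so cutting `f ⊓ g` down to `0` at `1` does not change its envelope there.
Associativity on `[0,1)` is then an identity in a linear order, and at `1` both sides are `1`
exactly when `f 1 = g 1 = h 1 = 1`, and `0` otherwise.
-/

section Envelope

variable {f : ℝ → ℝ} {x c : ℝ}

lemma MapsI.bddAbove_image (hf : MapsI f) {s : Set ℝ} (hs : s ⊆ Icc 0 1) : BddAbove (f '' s) :=
  ⟨1, by rintro _ ⟨y, hy, rfl⟩; exact (hf y (hs hy)).2⟩

lemma MapsI.le_fR (hf : MapsI f) (hx : 0 ≤ x) {t : ℝ} (ht : t ∈ Icc x 1) : f t ≤ fR f x :=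
  le_csSup (hf.bddAbove_image (Icc_subset_Icc_left hx)) (mem_image_of_mem f ht)

lemma MapsI.fR_le_one (hf : MapsI f) (hx : 0 ≤ x) (hx1 : x ≤ 1) : fR f x ≤ 1 :=
  csSup_le ((nonempty_Icc.2 hx1).image f) <| by
    rintro _ ⟨y, hy, rfl⟩
    exact (hf y ⟨hx.trans hy.1, hy.2⟩).2

lemma fR_one : fR f 1 = f 1 := by
  rw [fR, Icc_self, image_singleton, csSup_singleton]

lemma exists_lt_of_lt_fR (hx : x ≤ 1) (hc : c < fR f x) : ∃ t ∈ Icc x 1, c < f t :=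
  exists_mem_image.1 (exists_lt_of_lt_csSup ((nonempty_Icc.2 hx).image f) hc)

/- If `c < f^R x` were witnessed only at `1`, normality gives `s < 1` with `f s > f 1`, and
convexity on `[s, 1]` lifts `f x` above `f 1` when `s < x`. -/
lemma exists_lt_of_lt_fR_of_lt_one (hfn : NormalFn f) (hfc : ConvexFn f) (hf1 : f 1 < 1)
    (hx : x < 1) (hc : c < fR f x) : ∃ t ∈ Ico x 1, c < f t := by
  obtain ⟨u, hu, hcu⟩ := exists_lt_of_lt_fR hx.le hc
  rcases hu.2.lt_or_eq with hu1 | rfl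
  · exact ⟨u, ⟨hu.1, hu1⟩, hcu⟩
  obtain ⟨s, hs, hs1⟩ : ∃ s ∈ Icc (0:ℝ) 1, f 1 < f s :=
    exists_mem_image.1 (exists_lt_of_lt_csSup ((nonempty_Icc.2 zero_le_one).image f) (by rwa [hfn]))
  have hs1' : s < 1 := hs.2.lt_of_ne (by rintro rfl; exact lt_irrefl _ hs1)
  rcases le_total x s with hxs | hsx
  · exact ⟨s, ⟨hxs, hs1'⟩, hcu.trans hs1⟩
  · refine ⟨x, ⟨le_rfl, hx⟩, hcu.trans_le ?_⟩
    simpa [min_eq_right hs1.le] using hfc s x 1 hs.1 hsx hx.le le_rfl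

end Envelope

section Inter

variable {f g : ℝ → ℝ} {x c : ℝ}

lemma inter_comm (f g : ℝ → ℝ) : inter f g = inter g f := by
  funext x
  unfold inter
  congr 1
  ext v
  constructor <;>
    rintro ⟨y, hy, z, hz, hyz, rfl⟩ <;> exact ⟨z, hz, y, hy, by rwa [min_comm], min_comm _ _⟩

lemma MapsI.inter_bddAbove (hf : MapsI f) :
    BddAbove {v | ∃ y ∈ Icc (0:ℝ) 1, ∃ z ∈ Icc (0:ℝ) 1, min y z = x ∧ v = min (f y) (g z)} :=
  ⟨1, by rintro _ ⟨y, hy, z, -, -, rfl⟩; exact (min_le_left _ _).trans (hf y hy).2⟩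

lemma MapsI.min_le_inter (hf : MapsI f) {y z : ℝ} (hy : y ∈ Icc 0 1) (hz : z ∈ Icc 0 1) :
    min (f y) (g z) ≤ inter f g (min y z) :=
  le_csSup hf.inter_bddAbove ⟨y, hy, z, hz, rfl, rfl⟩

lemma inter_le_min_fR (hf : MapsI f) (hg : MapsI g) (hx : 0 ≤ x) {t : ℝ} (ht : t ∈ Icc x 1) :
    inter f g t ≤ min (fR f x) (fR g x) := by
  refine csSup_le ⟨_, t, ⟨hx.trans ht.1, ht.2⟩, t, ⟨hx.trans ht.1, ht.2⟩, min_self t, rfl⟩ ?_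
  rintro _ ⟨y, hy, z, hz, rfl, rfl⟩
  exact min_le_min (hf.le_fR hx ⟨ht.1.trans (min_le_left y z), hy.2⟩)
    (hg.le_fR hx ⟨ht.1.trans (min_le_right y z), hz.2⟩)

lemma min_fR_le_inter (hf : MapsI f) (hx : x ∈ Icc 0 1) : min (f x) (fR g x) ≤ inter f g x := by
  refine le_of_forall_lt fun c hc => ?_
  obtain ⟨z, hz, hcz⟩ := exists_lt_of_lt_fR hx.2 (lt_min_iff.1 hc).2
  calc c < min (f x) (g z) := lt_min (lt_min_iff.1 hc).1 hcz
    _ ≤ inter f g (min x z) := hf.min_le_inter hx ⟨hx.1.trans hz.1, hz.2⟩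
    _ = inter f g x := by rw [min_eq_left hz.1]

lemma inter_eq (hf : MapsI f) (hg : MapsI g) (hx : x ∈ Icc 0 1) :
    inter f g x = max (min (f x) (fR g x)) (min (fR f x) (g x)) := by
  refine le_antisymm ?_ (max_le (min_fR_le_inter hf hx) ?_)
  · refine csSup_le ⟨_, x, hx, x, hx, min_self x, rfl⟩ ?_
    rintro _ ⟨y, hy, z, hz, rfl, rfl⟩
    rcases le_total y z with hyz | hzy
    · rw [min_eq_left hyz]
      exact le_max_of_le_left (min_le_min_left _ (hg.le_fR hy.1 ⟨hyz, hz.2⟩))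
    · rw [min_eq_right hzy]
      exact le_max_of_le_right (min_le_min_right _ (hf.le_fR hz.1 ⟨hzy, hy.2⟩))
  · rw [_root_.inter_comm, min_comm]
    exact min_fR_le_inter hg hx

lemma inter_one (hf : MapsI f) (hg : MapsI g) : inter f g 1 = min (f 1) (g 1) := by
  rw [inter_eq hf hg ⟨zero_le_one, le_rfl⟩, fR_one, fR_one, max_self]

lemma mapsI_inter (hf : MapsI f) (hg : MapsI g) : MapsI (inter f g) := fun x hx =>
  ⟨(le_min (hf x hx).1 (hg x hx).1).trans (by simpa using hf.min_le_inter (g := g) hx hx),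
    (inter_le_min_fR hf hg hx.1 ⟨le_rfl, hx.2⟩).trans
      ((min_le_left _ _).trans (hf.fR_le_one hx.1 hx.2))⟩

lemma exists_lt_inter_of_lt_min_fR (hf : MapsI f) (hfn : NormalFn f) (hfc : ConvexFn f)
    (hgn : NormalFn g) (hgc : ConvexFn g) (h1 : f 1 < 1 ∨ g 1 < 1) (hx : x ∈ Ico 0 1)
    (hc : c < min (fR f x) (fR g x)) : ∃ t ∈ Ico x 1, c < inter f g t := by
  rw [lt_min_iff] at hc
  obtain ⟨y, hy, z, hz, hcy, hcz, hyz⟩ :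
      ∃ y ∈ Icc x 1, ∃ z ∈ Icc x 1, c < f y ∧ c < g z ∧ min y z < 1 := by
    rcases h1 with hf1 | hg1
    · obtain ⟨y, hy, hcy⟩ := exists_lt_of_lt_fR_of_lt_one hfn hfc hf1 hx.2 hc.1
      obtain ⟨z, hz, hcz⟩ := exists_lt_of_lt_fR hx.2.le hc.2
      exact ⟨y, Ico_subset_Icc_self hy, z, hz, hcy, hcz, min_lt_of_left_lt hy.2⟩
    · obtain ⟨y, hy, hcy⟩ := exists_lt_of_lt_fR hx.2.le hc.1
      obtain ⟨z, hz, hcz⟩ := exists_lt_of_lt_fR_of_lt_one hgn hgc hg1 hx.2 hc.2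
      exact ⟨y, hy, z, Ico_subset_Icc_self hz, hcy, hcz, min_lt_of_right_lt hz.2⟩
  exact ⟨min y z, ⟨le_min hy.1 hz.1, hyz⟩, (lt_min hcy hcz).trans_le
    (hf.min_le_inter ⟨hx.1.trans hy.1, hy.2⟩ ⟨hx.1.trans hz.1, hz.2⟩)⟩

end Inter

section Star

variable {f g : ℝ → ℝ} {x : ℝ}

lemma star_of_eqOn_ind1_left (hf : EqOn f ind1 (Icc 0 1)) (g : ℝ → ℝ) : star f g = g :=
  if_pos hf

lemma star_of_eqOn_ind1_right (hf : ¬ EqOn f ind1 (Icc 0 1)) (hg : EqOn g ind1 (Icc 0 1)) :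
    star f g = f := by
  rw [_root_.star, if_neg hf, if_pos hg]

lemma star_apply_of_ne_one (hf : ¬ EqOn f ind1 (Icc 0 1)) (hg : ¬ EqOn g ind1 (Icc 0 1))
    (hx : x ≠ 1) : star f g x = inter f g x := by
  rw [_root_.star, if_neg hf, if_neg hg]
  split_ifs <;> simp [hx]

lemma star_apply_one (hf' : ¬ EqOn f ind1 (Icc 0 1)) (hg' : ¬ EqOn g ind1 (Icc 0 1))
    (hf : MapsI f) (hg : MapsI g) : star f g 1 = if f 1 = 1 ∧ g 1 = 1 then 1 else 0 := by
  have hf1 := (hf 1 ⟨zero_le_one, le_rfl⟩).2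
  have hg1 := (hg 1 ⟨zero_le_one, le_rfl⟩).2
  have hmin : min (f 1) (g 1) = 1 ↔ f 1 = 1 ∧ g 1 = 1 := by
    refine ⟨fun h => ⟨le_antisymm hf1 (h.symm.le.trans (min_le_left _ _)),
      le_antisymm hg1 (h.symm.le.trans (min_le_right _ _))⟩, fun h => by rw [h.1, h.2, min_self]⟩
  rw [_root_.star, if_neg hf', if_neg hg']
  by_cases h : f 1 = 1 ∧ g 1 = 1
  · rw [if_pos (hmin.2 h), if_pos h, inter_one hf hg, h.1, h.2, min_self]
  · simp [mt hmin.1 h, h]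

lemma mapsI_star (hf : MapsI f) (hg : MapsI g) : MapsI (star f g) := by
  unfold _root_.star
  split_ifs
  · exact hg
  · exact hf
  · exact mapsI_inter hf hg
  · intro x hx
    dsimp only
    split_ifs
    · exact ⟨le_rfl, zero_le_one⟩
    · exact mapsI_inter hf hg x hx

lemma star_le_inter (hf : MapsI f) (hg : MapsI g) (hf' : ¬ EqOn f ind1 (Icc 0 1))
    (hg' : ¬ EqOn g ind1 (Icc 0 1)) (hx : x ∈ Icc 0 1) : star f g x ≤ inter f g x := by
  rcases eq_or_ne x 1 with rfl | hx1
  · rw [star_apply_one hf' hg' hf hg, inter_one hf hg]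
    split_ifs with h
    · rw [h.1, h.2, min_self]
    · exact le_min (hf 1 hx).1 (hg 1 hx).1
  · exact (star_apply_of_ne_one hf' hg' hx1).le

lemma fR_star (hf : MapsI f) (hg : MapsI g) (hfn : NormalFn f) (hfc : ConvexFn f)
    (hgn : NormalFn g) (hgc : ConvexFn g) (hf' : ¬ EqOn f ind1 (Icc 0 1))
    (hg' : ¬ EqOn g ind1 (Icc 0 1)) (hx : x ∈ Ico 0 1) :
    fR (star f g) x = min (fR f x) (fR g x) := by
  have hfg := mapsI_star hf hg
  refine le_antisymm (csSup_le ((nonempty_Icc.2 hx.2.le).image _) ?_) ?_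
  · rintro _ ⟨t, ht, rfl⟩
    exact (star_le_inter hf hg hf' hg' ⟨hx.1.trans ht.1, ht.2⟩).trans
      (inter_le_min_fR hf hg hx.1 ht)
  by_cases h1 : f 1 = 1 ∧ g 1 = 1
  · calc min (fR f x) (fR g x) ≤ 1 := (min_le_left _ _).trans (hf.fR_le_one hx.1 hx.2.le)
      _ = star f g 1 := by rw [star_apply_one hf' hg' hf hg, if_pos h1]
      _ ≤ fR (star f g) x := hfg.le_fR hx.1 ⟨hx.2.le, le_rfl⟩
  have h1' : f 1 < 1 ∨ g 1 < 1 := by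
    rw [not_and_or] at h1
    exact h1.imp (fun h => (hf 1 ⟨zero_le_one, le_rfl⟩).2.lt_of_ne h)
      (fun h => (hg 1 ⟨zero_le_one, le_rfl⟩).2.lt_of_ne h)
  refine le_of_forall_lt fun c hc => ?_
  obtain ⟨t, ht, hct⟩ := exists_lt_inter_of_lt_min_fR hf hfn hfc hgn hgc h1' hx hc
  calc c < inter f g t := hct
    _ = star f g t := (star_apply_of_ne_one hf' hg' ht.2.ne).symm
    _ ≤ fR (star f g) x := hfg.le_fR hx.1 (Ico_subset_Icc_self ht)

lemma exists_pos_of_not_eqOn_ind1 (hf : MapsI f) (hfn : NormalFn f)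
    (hf' : ¬ EqOn f ind1 (Icc 0 1)) : ∃ a ∈ Ico (0:ℝ) 1, 0 < f a := by
  by_contra! h0
  apply hf'
  have hzero : ∀ a ∈ Ico (0:ℝ) 1, f a = 0 := fun a ha =>
    le_antisymm (h0 a ha) (hf a (Ico_subset_Icc_self ha)).1
  have hone : f 1 = 1 := by
    refine le_antisymm (hf 1 ⟨zero_le_one, le_rfl⟩).2 ?_
    calc (1:ℝ) = sSup (f '' Icc 0 1) := hfn.symm
      _ ≤ f 1 := csSup_le ((nonempty_Icc.2 zero_le_one).image f) <| by
        rintro _ ⟨t, ht, rfl⟩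
        rcases ht.2.lt_or_eq with ht1 | rfl
        · rw [hzero t ⟨ht.1, ht1⟩]
          exact (hf 1 ⟨zero_le_one, le_rfl⟩).1
        · exact le_rfl
  intro x hx
  rcases hx.2.lt_or_eq with hx1 | rfl
  · simp [ind1, hx1.ne, hzero x ⟨hx.1, hx1⟩]
  · simp [ind1, hone]

lemma star_not_eqOn_ind1 (hf : MapsI f) (hg : MapsI g) (hfn : NormalFn f) (hgn : NormalFn g)
    (hf' : ¬ EqOn f ind1 (Icc 0 1)) (hg' : ¬ EqOn g ind1 (Icc 0 1)) :
    ¬ EqOn (star f g) ind1 (Icc 0 1) := by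
  obtain ⟨a, ha, hfa⟩ := exists_pos_of_not_eqOn_ind1 hf hfn hf'
  obtain ⟨b, hb, hgb⟩ := exists_pos_of_not_eqOn_ind1 hg hgn hg'
  have hab : min a b < 1 := min_lt_of_left_lt ha.2
  intro hEq
  have hpos : 0 < star f g (min a b) := by
    rw [star_apply_of_ne_one hf' hg' hab.ne]
    exact (lt_min hfa hgb).trans_le
      (hf.min_le_inter (Ico_subset_Icc_self ha) (Ico_subset_Icc_self hb))
  rw [hEq ⟨le_min ha.1 hb.1, hab.le⟩] at hpos
  simp [ind1, hab.ne] at hpos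

end Star

/- With `(a, A)` a value and its right envelope, this is associativity of
`(a, A) * (b, B) = (max (min a B) (min A b), min A B)`. -/
lemma max_min_pair_assoc {α : Type*} [LinearOrder α] (a b c A B C : α) :
    max (min (max (min a B) (min A b)) C) (min (min A B) c)
      = max (min a (min B C)) (min A (max (min b C) (min B c))) := by
  rw [min_max_distrib_right, min_max_distrib_left, min_assoc, min_assoc, min_assoc, max_assoc]

/-- `⋆` is associative on normal convex functions. -/
theorem stmt_17 (f g h : ℝ → ℝ) (hf : MapsI f) (hg : MapsI g) (hh : MapsI h)
    (hfn : NormalFn f) (hfc : ConvexFn f) (hgn : NormalFn g) (hgc : ConvexFn g)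
    (hhn : NormalFn h) (hhc : ConvexFn h) :
    Set.EqOn (star (star f g) h) (star f (star g h)) (Set.Icc (0:ℝ) 1) := by
  by_cases hAf : EqOn f ind1 (Icc 0 1)
  · rw [star_of_eqOn_ind1_left hAf, star_of_eqOn_ind1_left hAf]
    exact fun _ _ => rfl
  by_cases hAg : EqOn g ind1 (Icc 0 1)
  · rw [star_of_eqOn_ind1_right hAf hAg, star_of_eqOn_ind1_left hAg]
    exact fun _ _ => rfl
  by_cases hAh : EqOn h ind1 (Icc 0 1)
  · rw [star_of_eqOn_ind1_right (star_not_eqOn_ind1 hf hg hfn hgn hAf hAg) hAh,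
      star_of_eqOn_ind1_right hAg hAh]
    exact fun _ _ => rfl
  have hAfg := star_not_eqOn_ind1 hf hg hfn hgn hAf hAg
  have hAgh := star_not_eqOn_ind1 hg hh hgn hhn hAg hAh
  intro x hx
  rcases hx.2.lt_or_eq with hx1 | rfl
  · rw [star_apply_of_ne_one hAfg hAh hx1.ne, inter_eq (mapsI_star hf hg) hh hx,
      star_apply_of_ne_one hAf hAgh hx1.ne, inter_eq hf (mapsI_star hg hh) hx,
      star_apply_of_ne_one hAf hAg hx1.ne, inter_eq hf hg hx,
      star_apply_of_ne_one hAg hAh hx1.ne, inter_eq hg hh hx,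
      fR_star hf hg hfn hfc hgn hgc hAf hAg ⟨hx.1, hx1⟩,
      fR_star hg hh hgn hgc hhn hhc hAg hAh ⟨hx.1, hx1⟩]
    exact max_min_pair_assoc ..
  · rw [star_apply_one hAfg hAh (mapsI_star hf hg) hh,
      star_apply_one hAf hAgh hf (mapsI_star hg hh), star_apply_one hAf hAg hf hg,
      star_apply_one hAg hAh hg hh]
    by_cases hf1 : f 1 = 1 <;> by_cases hg1 : g 1 = 1 <;> by_cases hh1 : h 1 = 1 <;> simp [*]
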